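/- arXiv:2103.16275 — 2 statements merged into one kernel-verified Lean document; each statement's English description precedes it below -/
import Mathlib

section
/- Let α, β ∈ ℂ with α ≠ 0 and β ≠ 0, and let φ ∈ ℓ²(ℕ×ℕ, ℂ) satisfy Ω₁ φ = φ and Ω₂ φ = φ. Then there exist B, C ∈ ℂ such that φ = B • (coh α ⊠ coh 0) + C • (coh 0 ⊠ coh β). -/
open scoped ComplexConjugate ENNReal

/-- The components of the coherent state `|α⟩`: `exp(−|α|²/2)·αⁿ/√(n!)`. -/
noncomputable def cohFun (α : ℂ) : ℕ → ℂ := fun n =>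
  (Real.exp (-‖α‖ ^ 2 / 2) / Real.sqrt (Nat.factorial n) : ℝ) * α ^ n

lemma cohFun_memℓp (α : ℂ) : Memℓp (cohFun α) 2 := by
  apply memℓp_gen
  have h : Summable (fun n : ℕ =>
      Real.exp (-‖α‖ ^ 2 / 2) ^ 2 * ((‖α‖ ^ 2) ^ n / (Nat.factorial n))) :=
    (Real.summable_pow_div_factorial (‖α‖ ^ 2)).mul_left _
  refine h.congr fun n => ?_
  have h2 : ((2 : ℝ≥0∞).toReal) = (2 : ℝ) := by norm_num
  rw [h2, Real.rpow_two]
  have hn : ‖cohFun α n‖ = Real.exp (-‖α‖ ^ 2 / 2) / Real.sqrt (Nat.factorial n) * ‖α‖ ^ n := by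
    simp only [cohFun, norm_mul, norm_pow, Complex.norm_real, Real.norm_eq_abs]
    rw [abs_of_pos (by positivity)]
  rw [hn, mul_pow, div_pow, Real.sq_sqrt (by positivity), pow_right_comm]
  ring

/-- The coherent state `|α⟩` as an element of `ℓ²(ℕ, ℂ)`. -/
noncomputable def coh (α : ℂ) : lp (fun _ : ℕ => ℂ) 2 := ⟨cohFun α, cohFun_memℓp α⟩

/-- The product state `ψ ⊠ χ` in the two-mode space `ℓ²(ℕ×ℕ, ℂ)`,
with components `(ψ ⊠ χ)(n, m) = ψ n · χ m`. -/
noncomputable def tmul (ψ χ : lp (fun _ : ℕ => ℂ) 2) : lp (fun _ : ℕ × ℕ => ℂ) 2 :=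
  ⟨fun q => ψ q.1 * χ q.2, by
    apply memℓp_gen
    have hψ := (lp.memℓp ψ).summable (p := 2) (by norm_num)
    have hχ := (lp.memℓp χ).summable (p := 2) (by norm_num)
    refine (hψ.mul_of_nonneg hχ (fun n => Real.rpow_nonneg (norm_nonneg _) _)
      (fun n => Real.rpow_nonneg (norm_nonneg _) _)).congr fun q => ?_
    rw [norm_mul, Real.mul_rpow (norm_nonneg _) (norm_nonneg _)]⟩

/- The fixed-point equation of `Ω₂` says `φ(n,m) = b_m F_n + a_n G_m` with `a = coh α`,
`b = coh β`, and that of `Ω₁` that `φ` vanishes off the axes `n = 0`, `m = 0`. Evaluating at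
`(n,1)` and `(1,m)` with `n, m ≥ 1`, where `a₁, b₁ ≠ 0`, gives `F_n = c a_n` and `G_m = -c b_m`
off the origin; the `a_n b_m` terms then cancel, leaving only the axis terms `a_n δ_{m0}` and
`δ_{n0} b_m`, the components of `coh α ⊠ coh 0` and `coh 0 ⊠ coh β`. -/

lemma coh_apply (α : ℂ) (n : ℕ) : coh α n = cohFun α n := rfl

lemma tmul_apply (ψ χ : lp (fun _ : ℕ => ℂ) 2) (q : ℕ × ℕ) : tmul ψ χ q = ψ q.1 * χ q.2 := rfl

lemma coh_apply_ne_zero {α : ℂ} (hα : α ≠ 0) (n : ℕ) : coh α n ≠ 0 := by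
  rw [coh_apply, cohFun]
  refine mul_ne_zero ?_ (pow_ne_zero _ hα)
  have : 0 < Real.sqrt (Nat.factorial n) := Real.sqrt_pos.2 (by exact_mod_cast n.factorial_pos)
  exact Complex.ofReal_ne_zero.2 (div_pos (Real.exp_pos _) this).ne'

lemma coh_zero_apply (n : ℕ) : coh 0 n = if n = 0 then 1 else 0 := by
  cases n <;> simp [coh_apply, cohFun]

lemma exists_eq_axis_combination {K : Type*} [Field K] {a b F G : ℕ → K} {φ : ℕ → ℕ → K}
    {n₀ m₀ : ℕ} (hn₀ : n₀ ≠ 0) (hm₀ : m₀ ≠ 0) (ha : a n₀ ≠ 0) (hb : b m₀ ≠ 0)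
    (hφ : ∀ n m, φ n m = b m * F n + a n * G m)
    (hφ_axes : ∀ n m, n ≠ 0 → m ≠ 0 → φ n m = 0) :
    ∃ B C : K, ∀ n m, φ n m =
      B * (a n * if m = 0 then 1 else 0) + C * ((if n = 0 then 1 else 0) * b m) := by
  set c := -G m₀ / b m₀
  have hF : ∀ n, n ≠ 0 → F n = c * a n := fun n hn => by
    rw [div_mul_eq_mul_div, eq_div_iff hb]
    linear_combination hφ_axes n m₀ hn hm₀ - hφ n m₀
  have hG : ∀ m, m ≠ 0 → G m = -c * b m := fun m hm => by
    refine mul_left_cancel₀ ha ?_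
    linear_combination hφ_axes n₀ m hn₀ hm - hφ n₀ m - b m * hF n₀ hn₀
  refine ⟨G 0 + c * b 0, F 0 - c * a 0, fun n m => ?_⟩
  rcases eq_or_ne n 0 with rfl | hn <;> rcases eq_or_ne m 0 with rfl | hm
  · simp only [if_true, mul_one, one_mul]
    linear_combination hφ 0 0
  · simp only [if_true, if_neg hm, mul_zero, one_mul, zero_add]
    linear_combination hφ 0 m + a 0 * hG m hm
  · simp only [if_true, if_neg hn, mul_one, zero_mul, mul_zero, add_zero]
    linear_combination hφ n 0 + b 0 * hF n hn
  · simp only [if_neg hn, if_neg hm, mul_zero, zero_mul, add_zero]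
    exact hφ_axes n m hn hm

/-- any state fixed by `Ω₁` and `Ω₂` is a superposition of
`coh α ⊠ coh 0` and `coh 0 ⊠ coh β`. -/
theorem fixed_by_omega12_is_superposition (α β : ℂ) (hα : α ≠ 0) (hβ : β ≠ 0)
    (Ω₁ Ω₂ : lp (fun _ : ℕ × ℕ => ℂ) 2 →L[ℂ] lp (fun _ : ℕ × ℕ => ℂ) 2)
    (hΩ₁ : ∀ (φ : lp (fun _ : ℕ × ℕ => ℂ) 2) (n m : ℕ),
      (Ω₁ φ) (n, m) = if n = 0 ∨ m = 0 then φ (n, m) else 0)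
    (hΩ₂ : ∀ (φ : lp (fun _ : ℕ × ℕ => ℂ) 2) (n m : ℕ),
      (Ω₂ φ) (n, m)
        = coh β m * (∑' k : ℕ, conj (coh β k) * φ (n, k))
        + coh α n * (∑' k : ℕ, conj (coh α k) * φ (k, m))
        - coh α n * coh β m * (∑' k : ℕ, ∑' l : ℕ, conj (coh α k) * conj (coh β l) * φ (k, l)))
    (φ : lp (fun _ : ℕ × ℕ => ℂ) 2) (h1 : Ω₁ φ = φ) (h2 : Ω₂ φ = φ) :
    ∃ B C : ℂ, φ = B • tmul (coh α) (coh 0) + C • tmul (coh 0) (coh β) := by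
  set S := ∑' k : ℕ, ∑' l : ℕ, conj (coh α k) * conj (coh β l) * φ (k, l)
  have hφ_axes : ∀ n m, n ≠ 0 → m ≠ 0 → φ (n, m) = 0 := fun n m hn hm => by
    simpa [hn, hm, h1] using hΩ₁ φ n m
  have hφ : ∀ n m, φ (n, m) = coh β m * ((∑' k : ℕ, conj (coh β k) * φ (n, k)) - coh α n * S)
      + coh α n * ∑' k : ℕ, conj (coh α k) * φ (k, m) := fun n m => by
    rw [← congrArg (· (n, m)) h2, hΩ₂]
    ring
  obtain ⟨B, C, hBC⟩ := exists_eq_axis_combination (φ := fun n m => φ (n, m)) one_ne_zero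
    one_ne_zero (coh_apply_ne_zero hα 1) (coh_apply_ne_zero hβ 1) hφ hφ_axes
  refine ⟨B, C, lp.ext (funext fun ⟨n, m⟩ => ?_)⟩
  simp only [hBC, lp.coeFn_add, lp.coeFn_smul, Pi.add_apply, Pi.smul_apply, smul_eq_mul,
    tmul_apply, coh_zero_apply]
end

section
/- (Theorem 2) Let m ≥ 2, let α : Fin m → ℂ with α i ≠ 0 for every i, and let 𝔻 be an m-mode displacement operator with parameters (fun i => −(α i)/2). Let φ be a unit vector in the m-mode Hilbert space such that: (a) for every l with l+1 < m, φ is fixed by the operator (I ⊗ P₀ + P_{α l} ⊗ I − P_{α l} ⊗ P₀) acting on modes (l, l+1) and by the operator (I ⊗ P_{α(l+1)} + P₀ ⊗ I − P₀ ⊗ P_{α(l+1)}) acting on modes (l, l+1); and (b) (𝔻 φ) k = 0 for every k : Fin m → ℕ with Σ_i k i odd. Then there exists c ∈ ℂ with |c| = 1 such that φ = c • ψ^{GHZ-m}, where ψ^{GHZ-m} = (2(1 + exp(−(Σ_i |α i|²)/2)))^{−1/2} • (Coh α + Coh 0). -/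
open scoped ComplexConjugate ENNReal

/-- Components of the `m`-mode product coherent state. -/
noncomputable def CohFun {m : ℕ} (γ : Fin m → ℂ) : (Fin m → ℕ) → ℂ :=
  fun k => ∏ i, cohFun (γ i) (k i)

lemma CohFun_summable : ∀ (m : ℕ) (γ : Fin m → ℂ),
    Summable fun k : Fin m → ℕ => ∏ i, ‖cohFun (γ i) (k i)‖ ^ ((2 : ℝ≥0∞).toReal) := by
  intro m
  induction m with
  | zero =>
    intro γ
    haveI : Unique (Fin 0 → ℕ) := ⟨⟨fun i => i.elim0⟩, fun f => funext fun i => i.elim0⟩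
    exact Summable.of_finite
  | succ m ih =>
    intro γ
    have h0 : Summable fun x : ℕ => ‖cohFun (γ 0) x‖ ^ ((2 : ℝ≥0∞).toReal) :=
      (cohFun_memℓp (γ 0)).summable (by norm_num)
    have hrest := ih (fun i => γ i.succ)
    have hprod := h0.mul_of_nonneg hrest
      (fun x => Real.rpow_nonneg (norm_nonneg _) _)
      (fun k => Finset.prod_nonneg fun i _ => Real.rpow_nonneg (norm_nonneg _) _)
    refine (Fin.consEquiv fun _ : Fin (m + 1) => ℕ).summable_iff.1 (hprod.congr ?_)
    rintro ⟨x, k⟩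
    show _ = ∏ i, ‖cohFun (γ i) (((Fin.consEquiv fun _ : Fin (m + 1) => ℕ) (x, k)) i)‖ ^
      ((2 : ℝ≥0∞).toReal)
    rw [Fin.prod_univ_succ]
    simp [Fin.consEquiv, Fin.cons_zero, Fin.cons_succ]

lemma CohFun_memℓp {m : ℕ} (γ : Fin m → ℂ) : Memℓp (CohFun γ) 2 := by
  apply memℓp_gen
  refine (CohFun_summable m γ).congr fun k => ?_
  rw [CohFun, norm_prod, ← Real.finset_prod_rpow _ _ (fun i _ => norm_nonneg _)]

/-- The `m`-mode product coherent state `⊗ᵢ |γ i⟩` in `lp (fun _ : (Fin m → ℕ) => ℂ) 2`. -/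
noncomputable def Coh {m : ℕ} (γ : Fin m → ℂ) : lp (fun _ : Fin m → ℕ => ℂ) 2 :=
  ⟨CohFun γ, CohFun_memℓp γ⟩

/-- An `m`-mode displacement operator with parameters `γ : Fin m → ℂ`. -/
def IsDisplacement {m : ℕ}
    (𝔻 : lp (fun _ : Fin m → ℕ => ℂ) 2 ≃ₗᵢ[ℂ] lp (fun _ : Fin m → ℕ => ℂ) 2)
    (γ : Fin m → ℂ) : Prop :=
  ∀ β : Fin m → ℂ, 𝔻 (Coh β) =
    Complex.exp (∑ i, (γ i * conj (β i) - conj (γ i) * β i) / 2) • Coh (γ + β)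

/-!
When mode `l + 1` is not in the vacuum, the first test reduces to the projection of mode `l`
onto `|α l⟩`, so `φ k / CohFun α k` does not depend on `k l`; the second test gives the same for
mode `l + 1` when mode `l` is not in the vacuum. Since the modes form a path, every `k ≠ 0` can
be moved to `(1, …, 1)` one coordinate at a time, so `φ = a • Coh α + b • Coh 0`. The
displacement by `-α/2` turns this into `a • Coh (α/2) + b • Coh (-α/2)`, whose odd components
are `(a - b) * Coh (α/2) k`; they vanish only if `a = b`, and `‖φ‖ = 1` fixes `|a|`.
-/

open Function Finset

theorem SimpleGraph.Preconnected.exists_adj_ne_zero_ne {V M : Type*} [Nontrivial V] [Zero M]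
    {G : SimpleGraph V} (hG : G.Preconnected) {c : M} (hc : c ≠ 0) {k : V → M} (hk : k ≠ 0)
    (hkc : k ≠ fun _ => c) : ∃ i j, G.Adj i j ∧ k i ≠ 0 ∧ k j ≠ c := by
  by_cases hzero : ∃ z, k z = 0
  · obtain ⟨z, hz⟩ := hzero
    obtain ⟨i, hi⟩ := Function.ne_iff.1 hk
    obtain ⟨d, -, hd₁, hd₂⟩ :=
      (hG i z).some.exists_boundary_dart {x | k x ≠ 0} hi (by simpa using hz)
    refine ⟨d.fst, d.snd, d.adj, hd₁, ?_⟩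
    simp only [Set.mem_ofPred_eq, not_not] at hd₂
    exact hd₂ ▸ hc.symm
  · push Not at hzero
    obtain ⟨j, hj⟩ := Function.ne_iff.1 hkc
    obtain ⟨i, hij⟩ := exists_ne j
    obtain ⟨d, -, -, hd₂⟩ := (hG i j).some.exists_boundary_dart {j}ᶜ hij (by simp)
    simp only [Set.mem_compl_iff, Set.mem_singleton_iff, not_not] at hd₂
    exact ⟨d.fst, d.snd, d.adj, hzero _, hd₂ ▸ hj⟩

theorem SimpleGraph.Preconnected.apply_eq_apply_const {V M β : Type*} [Fintype V]
    [DecidableEq V] [Nontrivial V] [Zero M] {G : SimpleGraph V} (hG : G.Preconnected) {c : M}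
    (hc : c ≠ 0) {ψ : (V → M) → β}
    (hψ : ∀ i j, G.Adj i j → ∀ k : V → M, k j ≠ 0 → ∀ x, ψ (update k i x) = ψ k)
    {k : V → M} (hk : k ≠ 0) : ψ k = ψ fun _ => c := by
  classical
  -- `c ≠ 0` keeps every intermediate point nonzero
  induction hn : #{i | k i ≠ c} using Nat.strong_induction_on generalizing k with
  | _ n ih =>
  by_cases hkc : k = fun _ => c
  · rw [hkc]
  obtain ⟨i, j, hij, hi, hj⟩ := hG.exists_adj_ne_zero_ne hc hk hkc
  have hcount : #{i | update k j c i ≠ c} < n := by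
    have : ({i | update k j c i ≠ c} : Finset V) = ({i | k i ≠ c} : Finset V).erase j := by
      ext x
      by_cases hx : x = j <;> simp [hx]
    rw [this, ← hn]
    exact card_erase_lt_of_mem (by simpa using hj)
  calc ψ k = ψ (update (update k j c) j (k j)) := by simp
    _ = ψ (update k j c) := hψ j i hij.symm _ (by rwa [update_of_ne hij.ne]) _
    _ = ψ fun _ => c := ih _ hcount (Function.ne_iff.2 ⟨j, by simpa using hc⟩) rfl

lemma cohFun_zero : cohFun 0 = Pi.single 0 1 := by
  ext n
  rcases n with - | n <;> simp [cohFun]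

lemma cohFun_neg (α : ℂ) (n : ℕ) : cohFun (-α) n = (-1) ^ n * cohFun α n := by
  simp only [cohFun, norm_neg, neg_pow α]
  ring

lemma cohFun_ne_zero {α : ℂ} (hα : α ≠ 0) (n : ℕ) : cohFun α n ≠ 0 :=
  mul_ne_zero (Complex.ofReal_ne_zero.2 (by positivity)) (pow_ne_zero _ hα)

open scoped Nat in
lemma hasSum_norm_cohFun_sq (α : ℂ) : HasSum (fun n => ‖cohFun α n‖ ^ 2) 1 := by
  have hterm : ∀ n, ‖cohFun α n‖ ^ 2 = Real.exp (-‖α‖ ^ 2) * ((‖α‖ ^ 2) ^ n / n !) := by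
    intro n
    rw [cohFun, norm_mul, Complex.norm_real, Real.norm_of_nonneg (by positivity), norm_pow,
      mul_pow, div_pow, Real.sq_sqrt (by positivity), ← Real.exp_nat_mul, ← pow_mul,
      ← pow_mul]
    ring_nf
  have hexp := (NormedSpace.expSeries_div_hasSum_exp (‖α‖ ^ 2)).mul_left (Real.exp (-‖α‖ ^ 2))
  rwa [← Real.exp_eq_exp_ℝ, ← Real.exp_add, neg_add_cancel, Real.exp_zero,
    ← funext hterm] at hexp

lemma CohFun_zero {m : ℕ} : CohFun (0 : Fin m → ℂ) = Pi.single 0 1 := by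
  ext k
  simp [CohFun, cohFun_zero, Pi.single_apply, prod_boole, funext_iff]

lemma Coh_zero {m : ℕ} : Coh (0 : Fin m → ℂ) = lp.single 2 0 1 :=
  lp.ext (CohFun_zero.trans (lp.coeFn_single 2 0 1).symm)

lemma CohFun_neg {m : ℕ} (γ : Fin m → ℂ) (k : Fin m → ℕ) :
    CohFun (-γ) k = (-1) ^ (∑ i, k i) * CohFun γ k := by
  simp only [CohFun, Pi.neg_apply, cohFun_neg, prod_mul_distrib, prod_pow_eq_pow_sum]

lemma CohFun_ne_zero {m : ℕ} {γ : Fin m → ℂ} (hγ : ∀ i, γ i ≠ 0) (k : Fin m → ℕ) :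
    CohFun γ k ≠ 0 :=
  prod_ne_zero_iff.2 fun i _ => cohFun_ne_zero (hγ i) _

lemma CohFun_apply_zero {m : ℕ} (γ : Fin m → ℂ) :
    CohFun γ 0 = Real.exp (-(∑ i, ‖γ i‖ ^ 2) / 2) := by
  simp only [CohFun, Pi.zero_apply, cohFun, pow_zero, mul_one, Nat.factorial_zero,
    Nat.cast_one, Real.sqrt_one, div_one]
  rw [← Complex.ofReal_prod, ← Real.exp_sum, ← sum_div, ← sum_neg_distrib]

lemma CohFun_update {m : ℕ} (γ : Fin m → ℂ) (k : Fin m → ℕ) (L : Fin m) (n : ℕ) :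
    CohFun γ (update k L n) = cohFun (γ L) n * ∏ i ∈ univ.erase L, cohFun (γ i) (k i) := by
  rw [CohFun, ← mul_prod_erase univ _ (mem_univ L), update_self]
  congr 1
  exact prod_congr rfl fun i hi => by rw [update_of_ne (ne_of_mem_erase hi)]

theorem hasSum_prod_pi_of_nonneg {m : ℕ} {κ : Type*} {f : Fin m → κ → ℝ}
    (hf₀ : ∀ i n, 0 ≤ f i n) {s : Fin m → ℝ} (hf : ∀ i, HasSum (f i) (s i)) :
    HasSum (fun k : Fin m → κ => ∏ i, f i (k i)) (∏ i, s i) := by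
  induction m with
  | zero => simp
  | succ m ih =>
    let g : (Fin m → κ) → ℝ := fun k => ∏ i : Fin m, f i.succ (k i)
    have hg : HasSum g (∏ i : Fin m, s i.succ) := ih (fun i => hf₀ i.succ) fun i => hf i.succ
    have hfg : Summable fun p : κ × (Fin m → κ) => f 0 p.1 * g p.2 :=
      (hf 0).summable.mul_of_nonneg hg.summable (hf₀ 0) fun k =>
        prod_nonneg fun i _ => hf₀ i.succ (k i)
    have hcons : (fun k => ∏ i, f i (k i)) ∘ Fin.consEquiv (fun _ => κ)
        = fun p => f 0 p.1 * g p.2 := by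
      funext ⟨x, k⟩
      simp [g, Fin.prod_univ_succ]
    rw [Fin.prod_univ_succ, ← (Fin.consEquiv fun _ => κ).hasSum_iff, hcons]
    exact (hf 0).mul hg hfg

lemma norm_Coh {m : ℕ} (γ : Fin m → ℂ) : ‖Coh γ‖ = 1 := by
  have hsum := hasSum_prod_pi_of_nonneg (fun i n => sq_nonneg ‖cohFun (γ i) n‖)
    fun i => hasSum_norm_cohFun_sq (γ i)
  have hnorm := lp.hasSum_norm (p := 2) (by norm_num) (Coh γ)
  simp only [ENNReal.toReal_ofNat, Real.rpow_two, prod_const_one] at hsum hnorm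
  have hsq : ‖Coh γ‖ ^ 2 = 1 :=
    hnorm.unique (by simpa [Coh, CohFun, norm_prod, prod_pow] using hsum)
  exact (pow_eq_one_iff_of_nonneg (norm_nonneg _) two_ne_zero).1 hsq

lemma norm_Coh_add_Coh_zero {m : ℕ} (α : Fin m → ℂ) :
    ‖Coh α + Coh 0‖ = Real.sqrt (2 * (1 + Real.exp (-(∑ i, ‖α i‖ ^ 2) / 2))) := by
  rw [← Real.sqrt_sq (norm_nonneg _), norm_add_sq (𝕜 := ℂ), norm_Coh, norm_Coh, Coh_zero,
    lp.inner_single_right]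
  congr 1
  rw [show Coh α 0 = CohFun α 0 from rfl, CohFun_apply_zero, RCLike.inner_apply,
    Complex.conj_ofReal, one_mul, RCLike.re_to_complex, Complex.ofReal_re]
  ring

lemma IsDisplacement.apply_Coh_of_im_eq_zero {m : ℕ}
    {𝔻 : lp (fun _ : Fin m → ℕ => ℂ) 2 ≃ₗᵢ[ℂ] lp (fun _ : Fin m → ℕ => ℂ) 2} {γ : Fin m → ℂ}
    (h𝔻 : IsDisplacement 𝔻 γ) {β : Fin m → ℂ} (hβ : ∀ i, (γ i * conj (β i)).im = 0) :
    𝔻 (Coh β) = Coh (γ + β) := by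
  have hphase : ∀ i, γ i * conj (β i) - conj (γ i) * β i = 0 := fun i => by
    rw [← Complex.conj_conj (β i), ← map_mul, Complex.conj_conj, Complex.sub_conj, hβ i]
    simp
  simp [h𝔻 β, hphase]

lemma div_CohFun_update_eq {m : ℕ} {α : Fin m → ℂ} (hα : ∀ i, α i ≠ 0)
    {φ : (Fin m → ℕ) → ℂ} {L : Fin m} {k : Fin m → ℕ}
    (hφ : ∀ n, φ (update k L n)
      = cohFun (α L) n * ∑' j, conj (cohFun (α L) j) * φ (update k L j)) (n : ℕ) :
    φ (update k L n) / CohFun α (update k L n) = φ k / CohFun α k := by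
  have hratio : ∀ n, φ (update k L n) / CohFun α (update k L n)
      = (∑' j, conj (cohFun (α L) j) * φ (update k L j))
        / ∏ i ∈ univ.erase L, cohFun (α i) (k i) := fun n => by
    rw [hφ n, CohFun_update, mul_div_mul_left _ _ (cohFun_ne_zero (hα L) n)]
  rw [hratio n, ← hratio (k L), update_eq_self]

lemma exists_forall_ne_zero_eq_mul_CohFun {m : ℕ} [Nontrivial (Fin m)] {α : Fin m → ℂ}
    (hα : ∀ i, α i ≠ 0) {G : SimpleGraph (Fin m)} (hG : G.Preconnected)
    {φ : (Fin m → ℕ) → ℂ}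
    (hφ : ∀ i j, G.Adj i j → ∀ k : Fin m → ℕ, k j ≠ 0 →
      φ k = cohFun (α i) (k i) * ∑' n, conj (cohFun (α i) n) * φ (update k i n)) :
    ∃ a, ∀ k ≠ 0, φ k = a * CohFun α k := by
  refine ⟨φ (fun _ => 1) / CohFun α (fun _ => 1), fun k hk => ?_⟩
  rw [← hG.apply_eq_apply_const one_ne_zero (ψ := fun k => φ k / CohFun α k) ?_ hk,
    div_mul_cancel₀ _ (CohFun_ne_zero hα k)]
  intro i j hij k hj n
  refine div_CohFun_update_eq hα (fun n' => ?_) n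
  rw [hφ i j hij _ (by rwa [update_of_ne hij.ne']), update_self]
  simp_rw [update_idem]

lemma eq_smul_Coh_add_smul_Coh_zero {m : ℕ} {α : Fin m → ℂ} {φ : lp (fun _ : Fin m → ℕ => ℂ) 2}
    {a : ℂ} (hφ : ∀ k ≠ 0, φ k = a * CohFun α k) :
    φ = a • Coh α + (φ 0 - a * CohFun α 0) • Coh 0 := by
  ext k
  change φ k = a * CohFun α k + (φ 0 - a * CohFun α 0) * CohFun 0 k
  rcases eq_or_ne k 0 with rfl | hk
  · simp [CohFun_zero]
  · simp [CohFun_zero, hk, hφ k hk]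

lemma eq_of_odd_apply_smul_Coh_add_smul_Coh_neg_eq_zero {m : ℕ} [NeZero m] {β : Fin m → ℂ}
    (hβ : ∀ i, β i ≠ 0) {a b : ℂ}
    (h : ∀ k : Fin m → ℕ, Odd (∑ i, k i) → (a • Coh β + b • Coh (-β)) k = 0) : a = b := by
  have hodd : Odd (∑ i, Pi.single (0 : Fin m) 1 i) := by simp
  have hk := h _ hodd
  simp only [lp.coeFn_add, lp.coeFn_smul, Pi.add_apply, Pi.smul_apply, smul_eq_mul] at hk
  have hneg : Coh (-β) (Pi.single 0 1) = - Coh β (Pi.single 0 1) := by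
    simp [Coh, CohFun_neg]
  rw [hneg, mul_neg, ← sub_eq_add_neg, ← sub_mul] at hk
  exact sub_eq_zero.1 ((mul_eq_zero.1 hk).resolve_right (CohFun_ne_zero hβ _))

lemma exists_norm_eq_one_and_eq_smul_inv_norm_smul {𝕜 E : Type*} [RCLike 𝕜]
    [NormedAddCommGroup E] [NormedSpace 𝕜 E] {φ v : E} {a : 𝕜} (hφ : φ = a • v)
    (hnorm : ‖φ‖ = 1) : ∃ c : 𝕜, ‖c‖ = 1 ∧ φ = c • ((‖v‖ : 𝕜)⁻¹ • v) := by
  have hv : (‖v‖ : 𝕜) ≠ 0 := by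
    rintro h
    simp_all
  refine ⟨a * ‖v‖, ?_, ?_⟩
  · rw [← hnorm, hφ, norm_smul, norm_mul, RCLike.norm_ofReal, abs_norm]
  · rw [smul_smul, mul_assoc, mul_inv_cancel₀ hv, mul_one, hφ]

/-- Theorem 2: a unit vector passing all the local two-mode settings and
the displaced even-parity measurement equals the m-mode GHZ-like coherent state
`ψ^{GHZ-m}` up to a phase. -/
theorem ghz_verification (m : ℕ) (hm : 2 ≤ m) (α : Fin m → ℂ) (hα : ∀ i, α i ≠ 0)
    (𝔻 : lp (fun _ : Fin m → ℕ => ℂ) 2 ≃ₗᵢ[ℂ] lp (fun _ : Fin m → ℕ => ℂ) 2)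
    (h𝔻 : IsDisplacement 𝔻 (fun i => -(α i) / 2))
    (φ : lp (fun _ : Fin m → ℕ => ℂ) 2) (hnorm : ‖φ‖ = 1)
    (ha₁ : ∀ (l : ℕ) (hl : l + 1 < m) (k : Fin m → ℕ),
      φ k
        = cohFun 0 (k ⟨l + 1, hl⟩) *
            (∑' j : ℕ, conj (cohFun 0 j) * φ (Function.update k ⟨l + 1, hl⟩ j))
        + cohFun (α ⟨l, Nat.lt_of_succ_lt hl⟩) (k ⟨l, Nat.lt_of_succ_lt hl⟩) *
            (∑' j : ℕ, conj (cohFun (α ⟨l, Nat.lt_of_succ_lt hl⟩) j) *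
              φ (Function.update k ⟨l, Nat.lt_of_succ_lt hl⟩ j))
        - cohFun (α ⟨l, Nat.lt_of_succ_lt hl⟩) (k ⟨l, Nat.lt_of_succ_lt hl⟩) *
            cohFun 0 (k ⟨l + 1, hl⟩) *
            (∑' j : ℕ, ∑' j' : ℕ,
              conj (cohFun (α ⟨l, Nat.lt_of_succ_lt hl⟩) j) * conj (cohFun 0 j') *
                φ (Function.update (Function.update k ⟨l, Nat.lt_of_succ_lt hl⟩ j)
                    ⟨l + 1, hl⟩ j')))
    (ha₂ : ∀ (l : ℕ) (hl : l + 1 < m) (k : Fin m → ℕ),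
      φ k
        = cohFun (α ⟨l + 1, hl⟩) (k ⟨l + 1, hl⟩) *
            (∑' j : ℕ, conj (cohFun (α ⟨l + 1, hl⟩) j) * φ (Function.update k ⟨l + 1, hl⟩ j))
        + cohFun 0 (k ⟨l, Nat.lt_of_succ_lt hl⟩) *
            (∑' j : ℕ, conj (cohFun 0 j) * φ (Function.update k ⟨l, Nat.lt_of_succ_lt hl⟩ j))
        - cohFun 0 (k ⟨l, Nat.lt_of_succ_lt hl⟩) *
            cohFun (α ⟨l + 1, hl⟩) (k ⟨l + 1, hl⟩) *
            (∑' j : ℕ, ∑' j' : ℕ,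
              conj (cohFun 0 j) * conj (cohFun (α ⟨l + 1, hl⟩) j') *
                φ (Function.update (Function.update k ⟨l, Nat.lt_of_succ_lt hl⟩ j)
                    ⟨l + 1, hl⟩ j')))
    (hb : ∀ k : Fin m → ℕ, Odd (∑ i, k i) → (𝔻 φ) k = 0) :
    ∃ c : ℂ, ‖c‖ = 1 ∧
      φ = c • (((Real.sqrt (2 * (1 + Real.exp (-(∑ i, ‖α i‖ ^ 2) / 2))))⁻¹ : ℂ) •
        (Coh α + Coh (0 : Fin m → ℂ))) := by
  have : Nontrivial (Fin m) := Fin.nontrivial_iff_two_le.2 hm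
  have : NeZero m := ⟨by omega⟩
  have hslice : ∀ i j, (SimpleGraph.pathGraph m).Adj i j → ∀ k : Fin m → ℕ, k j ≠ 0 →
      φ k = cohFun (α i) (k i) * ∑' n, conj (cohFun (α i) n) * φ (update k i n) := by
    intro i j hij k hk
    rcases SimpleGraph.pathGraph_adj.1 hij with h | h
    · rcases i with ⟨l, _⟩
      rcases j with ⟨_, hl⟩
      subst h
      simpa [cohFun_zero, hk] using ha₁ l hl k
    · rcases j with ⟨l, _⟩
      rcases i with ⟨_, hl⟩
      subst h
      simpa [cohFun_zero, hk] using ha₂ l hl k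
  obtain ⟨a, ha⟩ :=
    exists_forall_ne_zero_eq_mul_CohFun hα (SimpleGraph.pathGraph_preconnected m) hslice
  have hφ := eq_smul_Coh_add_smul_Coh_zero ha
  set b := φ 0 - a * CohFun α 0
  have hDφ : 𝔻 φ = a • Coh (fun i => α i / 2) + b • Coh (-fun i => α i / 2) := by
    rw [hφ, map_add, map_smul, map_smul,
      h𝔻.apply_Coh_of_im_eq_zero fun i => by
        simp only [Complex.mul_im, Complex.div_ofNat_re, Complex.div_ofNat_im, Complex.neg_re,
          Complex.neg_im, Complex.conj_re, Complex.conj_im]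
        ring,
      h𝔻.apply_Coh_of_im_eq_zero fun i => by simp]
    congr 3 <;> funext i <;> simp only [Pi.add_apply, Pi.zero_apply, Pi.neg_apply] <;> ring
  have hab : a = b := eq_of_odd_apply_smul_Coh_add_smul_Coh_neg_eq_zero
    (fun i => div_ne_zero (hα i) two_ne_zero) (hDφ ▸ hb)
  rw [← norm_Coh_add_Coh_zero]
  exact exists_norm_eq_one_and_eq_smul_inv_norm_smul (by rw [hφ, hab, smul_add]) hnorm
end
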